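/- For every real g ∈ (0, 1/4) and every integer m ≥ 1, W_m(g) = g^m·W(g)^{2m−2}·X_m(g)·∏_{i=1}^{m−1} (X_i(g)/W(g))². -/

import Mathlib

/-- The sequence `X_m(g)` defined by `X_0 = 1`, `X_{m+1} = 1/(1 - g X_m)`. -/
noncomputable def Xseq (g : ℝ) : ℕ → ℝ
  | 0 => 1
  | m + 1 => 1 / (1 - g * Xseq g m)

/-- The fixed-height partition functions `W_0(g) = 1`, `W_m(g) = X_m(g) - X_{m-1}(g)` for `m ≥ 1`. -/
noncomputable def Wseq (g : ℝ) : ℕ → ℝ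
  | 0 => 1
  | m + 1 => Xseq g (m + 1) - Xseq g m

/-- The tree partition function `W(g) = (1 - √(1-4g))/(2g)`. -/
noncomputable def Wfun (g : ℝ) : ℝ := (1 - Real.sqrt (1 - 4 * g)) / (2 * g)

/-! Differencing `X_{k+1} = 1/(1 - g X_k)` gives the recursion `W_{k+1} = g X_{k+1} X_k W_k`,
hence `W_m = g^m X_m ∏_{i=1}^{m-1} X_i²`; the powers of `W(g)` in the statement cancel. -/

lemma Wfun_ne_zero {g : ℝ} (hg : g ≠ 0) : Wfun g ≠ 0 := by
  refine div_ne_zero (sub_ne_zero.mpr fun h ↦ hg ?_) (by positivity)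
  linarith [Real.sqrt_eq_one.mp h.symm]

lemma Xseq_mem_Icc {g : ℝ} (hg0 : 0 ≤ g) (hg1 : g ≤ 1 / 4) (m : ℕ) :
    Xseq g m ∈ Set.Icc 1 2 := by
  induction m with
  | zero => norm_num [Xseq]
  | succ k ih =>
    obtain ⟨hX1, hX2⟩ := ih
    have hd_ge : 1 / 2 ≤ 1 - g * Xseq g k := by nlinarith
    have hd_le : 1 - g * Xseq g k ≤ 1 := by nlinarith
    rw [Xseq]
    constructor
    · rw [le_div_iff₀ (by linarith)]; linarith
    · rw [div_le_iff₀ (by linarith)]; linarith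

lemma one_sub_mul_Xseq_pos {g : ℝ} (hg0 : 0 ≤ g) (hg1 : g ≤ 1 / 4) (m : ℕ) :
    0 < 1 - g * Xseq g m := by
  obtain ⟨-, hX⟩ := Xseq_mem_Icc hg0 hg1 m
  nlinarith

lemma inv_one_sub_mul_sub_inv_one_sub_mul {K : Type*} [Field K] {g a b : K}
    (ha : 1 - g * a ≠ 0) (hb : 1 - g * b ≠ 0) :
    (1 - g * a)⁻¹ - (1 - g * b)⁻¹ = g * (1 - g * a)⁻¹ * (1 - g * b)⁻¹ * (a - b) := by
  field_simp
  ring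

lemma Xseq_succ (g : ℝ) (k : ℕ) : Xseq g (k + 1) = (1 - g * Xseq g k)⁻¹ := one_div _

section Recursion

variable {g : ℝ} (hden : ∀ j, 1 - g * Xseq g j ≠ 0)
include hden

lemma Wseq_succ (k : ℕ) : Wseq g (k + 1) = g * Xseq g (k + 1) * Xseq g k * Wseq g k := by
  cases k with
  | zero =>
    have h₀ : 1 - g ≠ 0 := by simpa [Xseq] using hden 0
    show 1 / (1 - g * 1) - 1 = g * (1 / (1 - g * 1)) * 1 * 1
    field_simp
    ring
  | succ k =>
    have h := inv_one_sub_mul_sub_inv_one_sub_mul (hden (k + 1)) (hden k)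
    rwa [← Xseq_succ, ← Xseq_succ] at h

lemma Wseq_succ_eq_prod (k : ℕ) :
    Wseq g (k + 1) = g ^ (k + 1) * Xseq g (k + 1) * ∏ i ∈ Finset.Icc 1 k, Xseq g i ^ 2 := by
  induction k with
  | zero => rw [Wseq_succ hden]; simp [Wseq, Xseq]
  | succ k ih =>
    rw [Wseq_succ hden, ih, Finset.prod_Icc_succ_top (by omega)]
    ring

end Recursion

lemma pow_mul_prod_div_sq {ι K : Type*} [Field K] (s : Finset ι) (f : ι → K) {c : K}
    (hc : c ≠ 0) : c ^ (2 * s.card) * ∏ i ∈ s, (f i / c) ^ 2 = ∏ i ∈ s, f i ^ 2 := by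
  simp only [div_pow, Finset.prod_div_distrib, Finset.prod_const, ← pow_mul]
  field_simp

theorem stmt_5 (g : ℝ) (hg0 : 0 < g) (hg1 : g < 1/4) (m : ℕ) (hm : 1 ≤ m) :
    Wseq g m =
      g ^ m * Wfun g ^ (2 * m - 2) * Xseq g m *
        ∏ i ∈ Finset.Icc 1 (m - 1), (Xseq g i / Wfun g) ^ 2 := by
  obtain ⟨k, rfl⟩ := Nat.exists_eq_add_of_le' hm
  have hden j := (one_sub_mul_Xseq_pos hg0.le hg1.le j).ne'
  have hW := pow_mul_prod_div_sq (Finset.Icc 1 k) (Xseq g) (Wfun_ne_zero hg0.ne')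
  rw [Nat.card_Icc, Nat.add_sub_cancel] at hW
  rw [Wseq_succ_eq_prod hden, Nat.add_sub_cancel, show 2 * (k + 1) - 2 = 2 * k by omega, ← hW]
  ring
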